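/- arXiv:1311.3003 — 2 statements merged into one kernel-verified Lean document; each statement's English description precedes it below -/
import Mathlib

section
/- Fix a signal intensity μ_s > 0 and let 0 < μ₁ < μ₂ < μ_s < μ₃ < μ₄. Assume ĉ(μ_s,μ₄) > 0 and b̂(μ_s)/(ĉ(μ_s,μ₄) + b̂(μ_s)) < 1/2. Then the asymptotic key generation rate R satisfies the chain R(μ_s,μ₁) ≥ R(μ_s,μ₂) ≥ R(μ_s,μ₃) ≥ R(μ_s,μ₄); i.e., for fixed μ_s the rate R(μ_s,μ_d) is monotonically decreasing in the decoy intensity μ_d. -/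
/-- Binary entropy function (base-2). Note `Real.logb 2 0 = 0`, so `binEnt 0 = binEnt 1 = 0`. -/
noncomputable def binEnt (x : ℝ) : ℝ :=
  -x * Real.logb 2 x - (1 - x) * Real.logb 2 (1 - x)

/-- Estimate `b̂(μ)` of the phase-error detection rate of the single photon pulse. -/
noncomputable def bHat (α s p₀ μ : ℝ) : ℝ :=
  (s * (1 - Real.exp (-α * μ)) * Real.exp μ + (p₀ / 2) * (Real.exp μ - 1)) / μ

/-- Estimate `ĉ(μ₁,μ₂)` of the rate that the single photon pulse is detected
without phase error. -/
noncomputable def cHat (α s p₀ μ₁ μ₂ : ℝ) : ℝ :=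
  (μ₂ ^ 2 * Real.exp μ₁ * ((1 - s) * (1 - Real.exp (-α * μ₁)) + (p₀ / 2) * (1 - Real.exp (-μ₁)))
    - μ₁ ^ 2 * Real.exp μ₂ * ((1 - s) * (1 - Real.exp (-α * μ₂)) + (p₀ / 2) * (1 - Real.exp (-μ₂))))
  / (μ₁ * μ₂ * (μ₂ - μ₁))

/-- Detection rate `p₊(μ)` of a pulse of intensity `μ`. -/
noncomputable def pPlus (α p₀ μ : ℝ) : ℝ := 1 - Real.exp (-α * μ) + p₀

/-- Error rate `e₊(μ)` of a pulse of intensity `μ`. -/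
noncomputable def ePlus (α s p₀ μ : ℝ) : ℝ :=
  (s * (1 - Real.exp (-α * μ)) + p₀ / 2) / pPlus α p₀ μ

/-- The (improved) asymptotic key generation rate `R(μ_s, μ_d)`. -/
noncomputable def Rrate (α s p₀ η μs μd : ℝ) : ℝ :=
  if μd < μs then
    μs * Real.exp (-μs) * (cHat α s p₀ μd μs + bHat α s p₀ μd) *
        (1 - binEnt (bHat α s p₀ μd / (cHat α s p₀ μd μs + bHat α s p₀ μd)))
      + Real.exp (-μs) * p₀ - pPlus α p₀ μs * η * binEnt (ePlus α s p₀ μs)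
  else
    μs * Real.exp (-μs) * (cHat α s p₀ μs μd + bHat α s p₀ μs) *
        (1 - binEnt (bHat α s p₀ μs / (cHat α s p₀ μs μd + bHat α s p₀ μs)))
      + Real.exp (-μs) * p₀ - pPlus α p₀ μs * η * binEnt (ePlus α s p₀ μs)


/-!
Writing `K(c, b) = (c + b)(1 - h(b / (c + b)))`, the rate is `R(μ_s, μ_d) = μ_s e^{-μ_s} K(ĉ, b̂)`
plus a term independent of `μ_d`. In bits, `∂K/∂c = 1 - log₂((c + b)/c)` and, by symmetry,
`∂K/∂b = 1 - log₂((c + b)/b)`, so `K` increases in `c` and decreases in `b` as long as `b ≤ c`.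

The estimate `b̂` increases with the intensity because `(e^μ - e^{βμ})/μ` is a multiple of a
secant slope of `exp` whose endpoints both move right. Under `x = 1/μ`, `ĉ(μ₁, μ₂)` is the secant
slope between `1/μ₁` and `1/μ₂` of a positive combination of the functions `x² (e^{1/x} - e^{β/x})`
with `β ≤ 1`, which are convex: their second derivative is `Q(1/x) - Q(β/x)` with
`Q(t) = eᵗ(t² - 2t + 2)` increasing. All slopes in question share the endpoint `1/μ_s`, so `ĉ`
decreases in `μ_d`, and `b̂ ≤ ĉ` at `μ₄` propagates to every smaller decoy intensity.
-/

open Real Set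

noncomputable def singlePhotonKey (c b : ℝ) : ℝ :=
  (c + b) * (1 - binEnt (b / (c + b)))

lemma singlePhotonKey_eq {x y : ℝ} (hx : 0 < x) (hy : 0 < y) :
    singlePhotonKey x y = x + y - (negMulLog x + negMulLog y - negMulLog (x + y)) / log 2 := by
  have hxy : 0 < x + y := by positivity
  have hcompl : 1 - y / (x + y) = x / (x + y) := by field_simp; ring
  rw [singlePhotonKey, binEnt, hcompl, logb, logb, log_div hy.ne' hxy.ne',
    log_div hx.ne' hxy.ne']
  simp only [negMulLog]
  field_simp
  ring

lemma singlePhotonKey_comm {x y : ℝ} (hx : 0 < x) (hy : 0 < y) :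
    singlePhotonKey x y = singlePhotonKey y x := by
  rw [singlePhotonKey_eq hx hy, singlePhotonKey_eq hy hx, add_comm y x]
  ring

lemma hasDerivAt_singlePhotonKey {x y : ℝ} (hx : 0 < x) (hy : 0 < y) :
    HasDerivAt (singlePhotonKey · y) (1 - (log (x + y) - log x) / log 2) x := by
  have hxy : x + y ≠ 0 := by positivity
  have h := ((hasDerivAt_id x).add_const y).sub
    ((((hasDerivAt_negMulLog hx.ne').add_const (negMulLog y)).sub
      ((hasDerivAt_negMulLog hxy).comp x ((hasDerivAt_id x).add_const y))).div_const (log 2))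
  exact (h.congr_deriv (by ring)).congr_of_eventuallyEq
    ((lt_mem_nhds hx).mono fun z hz => singlePhotonKey_eq hz hy)

lemma singlePhotonKey_deriv_nonneg_iff {x y : ℝ} (hx : 0 < x) (hy : 0 < y) :
    0 ≤ 1 - (log (x + y) - log x) / log 2 ↔ y ≤ x := by
  rw [sub_nonneg, div_le_one (log_pos one_lt_two), sub_le_iff_le_add,
    ← log_mul two_ne_zero hx.ne', log_le_log_iff (by positivity) (by positivity)]
  constructor <;> intro h <;> linarith

lemma singlePhotonKey_monotoneOn {y : ℝ} (hy : 0 < y) :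
    MonotoneOn (singlePhotonKey · y) (Ici y) := by
  refine monotoneOn_of_hasDerivWithinAt_nonneg (convex_Ici y)
    (f' := fun x => 1 - (log (x + y) - log x) / log 2)
    (fun x hx => (hasDerivAt_singlePhotonKey (hy.trans_le hx) hy).continuousAt.continuousWithinAt)
    (fun x hx => ?_) (fun x hx => ?_) <;> rw [interior_Ici] at hx
  · exact (hasDerivAt_singlePhotonKey (hy.trans hx) hy).hasDerivWithinAt
  · exact (singlePhotonKey_deriv_nonneg_iff (hy.trans hx) hy).2 hx.le

lemma singlePhotonKey_antitoneOn {y : ℝ} (hy : 0 < y) :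
    AntitoneOn (singlePhotonKey · y) (Ioc 0 y) := by
  refine antitoneOn_of_hasDerivWithinAt_nonpos (convex_Ioc 0 y)
    (f' := fun x => 1 - (log (x + y) - log x) / log 2)
    (fun x hx => (hasDerivAt_singlePhotonKey hx.1 hy).continuousAt.continuousWithinAt)
    (fun x hx => ?_) (fun x hx => ?_) <;> rw [interior_Ioc] at hx
  · exact (hasDerivAt_singlePhotonKey hx.1 hy).hasDerivWithinAt
  · exact (not_le.1 ((singlePhotonKey_deriv_nonneg_iff hx.1 hy).not.2 (not_le.2 hx.2))).le

lemma singlePhotonKey_le_singlePhotonKey {b' b c' c : ℝ} (hb' : 0 < b') (hb'b : b' ≤ b)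
    (hbc' : b ≤ c') (hc'c : c' ≤ c) : singlePhotonKey c' b ≤ singlePhotonKey c b' := by
  have hb : 0 < b := hb'.trans_le hb'b
  have hc : 0 < c := hb.trans_le (hbc'.trans hc'c)
  calc singlePhotonKey c' b ≤ singlePhotonKey c b :=
        singlePhotonKey_monotoneOn hb hbc' (hbc'.trans hc'c) hc'c
    _ = singlePhotonKey b c := singlePhotonKey_comm hc hb
    _ ≤ singlePhotonKey b' c :=
        singlePhotonKey_antitoneOn hc ⟨hb', hb'b.trans (hbc'.trans hc'c)⟩
          ⟨hb, hbc'.trans hc'c⟩ hb'b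
    _ = singlePhotonKey c b' := singlePhotonKey_comm hb' hc

lemma exp_sub_exp_mul_div_pos {β μ : ℝ} (hβ : β < 1) (hμ : 0 < μ) :
    0 < (exp μ - exp (β * μ)) / μ :=
  div_pos (sub_pos.2 (exp_lt_exp.2 (by nlinarith))) hμ

lemma monotoneOn_exp_sub_exp_mul_div {β : ℝ} (hβ₀ : 0 ≤ β) (hβ₁ : β < 1) :
    MonotoneOn (fun μ => (exp μ - exp (β * μ)) / μ) (Ioi 0) := by
  have h_eq : ∀ μ ≠ 0, (exp μ - exp (β * μ)) / μ = (1 - β) * slope exp (β * μ) μ := by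
    intro μ hμ
    have : 1 - β ≠ 0 := by linarith
    rw [slope_def_field]
    field_simp
  intro a (ha : 0 < a) b (hb : 0 < b) hab
  have hβa : β * a < a := by nlinarith
  have hβb : β * b < b := by nlinarith
  simp only
  rw [h_eq a ha.ne', h_eq b hb.ne']
  refine mul_le_mul_of_nonneg_left ?_ (by linarith)
  calc slope exp (β * a) a ≤ slope exp (β * a) b :=
        convexOn_exp.slope_mono (mem_univ _) ⟨mem_univ _, hβa.ne'⟩
          ⟨mem_univ _, (hβa.trans_le hab).ne'⟩ hab
    _ = slope exp b (β * a) := slope_comm _ _ _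
    _ ≤ slope exp b (β * b) :=
        convexOn_exp.slope_mono (mem_univ _) ⟨mem_univ _, (hβa.trans_le hab).ne⟩
          ⟨mem_univ _, hβb.ne⟩ (by nlinarith)
    _ = slope exp (β * b) b := slope_comm _ _ _

lemma bHat_eq (α s p₀ μ : ℝ) :
    bHat α s p₀ μ = s * ((exp μ - exp ((1 - α) * μ)) / μ)
      + p₀ / 2 * ((exp μ - exp (0 * μ)) / μ) := by
  have h : exp ((1 - α) * μ) = exp (-α * μ) * exp μ := by rw [← exp_add]; ring_nf
  rw [bHat, h, zero_mul, exp_zero]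
  ring

lemma bHat_pos {α s p₀ μ : ℝ} (hα : 0 < α) (hs : 0 ≤ s) (hp : 0 < p₀) (hμ : 0 < μ) :
    0 < bHat α s p₀ μ := by
  rw [bHat_eq]
  have := exp_sub_exp_mul_div_pos (by linarith : 1 - α < 1) hμ
  have := exp_sub_exp_mul_div_pos zero_lt_one hμ
  positivity

lemma bHat_monotoneOn {α s p₀ : ℝ} (hα : 0 < α) (hα₁ : α ≤ 1) (hs : 0 ≤ s) (hp : 0 ≤ p₀) :
    MonotoneOn (bHat α s p₀) (Ioi 0) := by
  intro a ha b hb hab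
  rw [bHat_eq, bHat_eq]
  gcongr ?_ + ?_
  · exact mul_le_mul_of_nonneg_left
      (monotoneOn_exp_sub_exp_mul_div (by linarith) (by linarith) ha hb hab) hs
  · exact mul_le_mul_of_nonneg_left
      (monotoneOn_exp_sub_exp_mul_div le_rfl zero_lt_one ha hb hab) (by positivity)

lemma hasDerivAt_sq_mul_exp_mul_inv (c : ℝ) {x : ℝ} (hx : x ≠ 0) :
    HasDerivAt (fun y => y ^ 2 * exp (c * y⁻¹)) (exp (c * x⁻¹) * (2 * x - c)) x := by
  have h := (hasDerivAt_pow 2 x).mul ((hasDerivAt_inv hx).const_mul c).exp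
  refine h.congr_deriv ?_
  field_simp
  ring

lemma hasDerivAt_exp_mul_inv_mul (c : ℝ) {x : ℝ} (hx : x ≠ 0) :
    HasDerivAt (fun y => exp (c * y⁻¹) * (2 * y - c))
      (exp (c * x⁻¹) * ((c * x⁻¹) ^ 2 - 2 * (c * x⁻¹) + 2)) x := by
  have h := ((hasDerivAt_inv hx).const_mul c).exp.mul (((hasDerivAt_id x).const_mul 2).sub_const c)
  refine h.congr_deriv ?_
  simp only [id_eq]
  field_simp
  ring

lemma monotone_exp_mul_sq_sub_add : Monotone fun t => exp t * (t ^ 2 - 2 * t + 2) := by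
  refine monotone_of_hasDerivAt_nonneg (f' := fun t => exp t * t ^ 2) (fun t => ?_)
    (fun t => by positivity)
  have h := (hasDerivAt_exp t).mul (((hasDerivAt_pow 2 t).sub ((hasDerivAt_id t).const_mul 2)).add_const 2)
  exact h.congr_deriv (by simp only [id_eq, Pi.sub_apply]; ring)

lemma convexOn_sq_mul_exp_inv_sub {β : ℝ} (hβ : β ≤ 1) :
    ConvexOn ℝ (Ioi 0) fun x => x ^ 2 * exp x⁻¹ - x ^ 2 * exp (β * x⁻¹) := by
  have hf : ∀ x ≠ (0 : ℝ), HasDerivAt (fun x => x ^ 2 * exp x⁻¹ - x ^ 2 * exp (β * x⁻¹))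
      (exp x⁻¹ * (2 * x - 1) - exp (β * x⁻¹) * (2 * x - β)) x := fun x hx => by
    have h := hasDerivAt_sq_mul_exp_mul_inv 1 hx
    simp only [one_mul] at h
    exact h.sub (hasDerivAt_sq_mul_exp_mul_inv β hx)
  refine convexOn_of_hasDerivWithinAt2_nonneg (convex_Ioi 0)
    (f' := fun x => exp x⁻¹ * (2 * x - 1) - exp (β * x⁻¹) * (2 * x - β))
    (f'' := fun x => exp x⁻¹ * (x⁻¹ ^ 2 - 2 * x⁻¹ + 2)
      - exp (β * x⁻¹) * ((β * x⁻¹) ^ 2 - 2 * (β * x⁻¹) + 2))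
    (fun x hx => (hf x (ne_of_gt hx)).continuousAt.continuousWithinAt) (fun x hx => ?_)
    (fun x hx => ?_) (fun x hx => ?_) <;> rw [interior_Ioi] at hx
  · exact (hf x (ne_of_gt hx)).hasDerivWithinAt
  · have h := hasDerivAt_exp_mul_inv_mul 1 (ne_of_gt hx)
    simp only [one_mul] at h
    exact (h.sub
      (hasDerivAt_exp_mul_inv_mul β (ne_of_gt hx))).hasDerivWithinAt
  · have : β * x⁻¹ ≤ x⁻¹ := mul_le_of_le_one_left (inv_nonneg.2 (le_of_lt hx)) hβ
    exact sub_nonneg.2 (monotone_exp_mul_sq_sub_add this)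

noncomputable def cHatPotential (α s p₀ x : ℝ) : ℝ :=
  x ^ 2 * exp x⁻¹ * ((1 - s) * (1 - exp (-α * x⁻¹)) + p₀ / 2 * (1 - exp (-x⁻¹)))

lemma cHat_eq_slope {α s p₀ a b : ℝ} (ha : 0 < a) (hb : 0 < b) (hab : a ≠ b) :
    cHat α s p₀ a b = slope (cHatPotential α s p₀) a⁻¹ b⁻¹ := by
  have : b - a ≠ 0 := sub_ne_zero.2 hab.symm
  rw [slope_def_field, cHat, cHatPotential, cHatPotential, inv_inv, inv_inv]
  field_simp
  ring

lemma cHatPotential_convexOn {α s p₀ : ℝ} (hα : 0 ≤ α) (hs : s ≤ 1) (hp : 0 ≤ p₀) :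
    ConvexOn ℝ (Ioi 0) (cHatPotential α s p₀) := by
  refine (((convexOn_sq_mul_exp_inv_sub (by linarith : 1 - α ≤ 1)).smul (sub_nonneg.2 hs)).add
    ((convexOn_sq_mul_exp_inv_sub zero_le_one).smul (by positivity : 0 ≤ p₀ / 2))).congr
    fun x _ => ?_
  have h₁ : exp ((1 - α) * x⁻¹) = exp x⁻¹ * exp (-α * x⁻¹) := by rw [← exp_add]; ring_nf
  have h₀ : exp (0 * x⁻¹) = exp x⁻¹ * exp (-x⁻¹) := by rw [← exp_add]; ring_nf
  simp only [Pi.add_apply, smul_eq_mul, cHatPotential, h₁, h₀]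
  ring

lemma slope_cHatPotential_antitoneOn {α s p₀ μs : ℝ} (hα : 0 ≤ α) (hs : s ≤ 1) (hp : 0 ≤ p₀)
    (hμs : 0 < μs) :
    AntitoneOn (fun μ => slope (cHatPotential α s p₀) μs⁻¹ μ⁻¹) (Ioi 0 \ {μs}) := by
  rintro a ⟨ha, has⟩ b ⟨hb, hbs⟩ hab
  exact (cHatPotential_convexOn hα hs hp).slope_mono (inv_pos.2 hμs)
    ⟨mem_Ioi.2 (inv_pos.2 hb), fun h => hbs (inv_injective h)⟩
    ⟨mem_Ioi.2 (inv_pos.2 ha), fun h => has (inv_injective h)⟩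
    (inv_anti₀ ha hab)

lemma Rrate_eq {α s p₀ η μs μd : ℝ} (hμs : 0 < μs) (hμd : 0 < μd) (hne : μd ≠ μs) :
    Rrate α s p₀ η μs μd = μs * exp (-μs) *
        singlePhotonKey (slope (cHatPotential α s p₀) μs⁻¹ μd⁻¹) (bHat α s p₀ (min μd μs))
      + (exp (-μs) * p₀ - pPlus α p₀ μs * η * binEnt (ePlus α s p₀ μs)) := by
  rcases hne.lt_or_gt with h | h
  · rw [Rrate, if_pos h, min_eq_left h.le, cHat_eq_slope hμd hμs hne, slope_comm, singlePhotonKey]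
    ring
  · rw [Rrate, if_neg (not_lt.2 h.le), min_eq_right h.le, cHat_eq_slope hμs hμd hne.symm,
      singlePhotonKey]
    ring

theorem Rrate_antitoneOn {α s p₀ η μs μ : ℝ} (hα : 0 < α) (hα₁ : α ≤ 1) (hs₀ : 0 ≤ s)
    (hs₁ : s ≤ 1) (hp : 0 < p₀) (hμs : 0 < μs) (hμsμ : μs < μ)
    (hbc : bHat α s p₀ μs ≤ cHat α s p₀ μs μ) :
    AntitoneOn (Rrate α s p₀ η μs) (Ioc 0 μ \ {μs}) := by
  rintro a ⟨⟨ha, haμ⟩, has⟩ b ⟨⟨hb, hbμ⟩, hbs⟩ hab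
  have hc := slope_cHatPotential_antitoneOn hα.le hs₁ hp.le hμs
  have hb_mono := bHat_monotoneOn hα hα₁ hs₀ hp.le
  have hμ : μ ∈ Ioi 0 \ {μs} := ⟨hμs.trans hμsμ, hμsμ.ne'⟩
  rw [cHat_eq_slope hμs (hμs.trans hμsμ) hμsμ.ne] at hbc
  have hb_le_c : bHat α s p₀ (min b μs) ≤ slope (cHatPotential α s p₀) μs⁻¹ b⁻¹ :=
    calc bHat α s p₀ (min b μs) ≤ bHat α s p₀ μs :=
          hb_mono (lt_min hb hμs) hμs (min_le_right b μs)
      _ ≤ _ := hbc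
      _ ≤ _ := hc ⟨hb, hbs⟩ hμ hbμ
  rw [Rrate_eq hμs hb hbs, Rrate_eq hμs ha has]
  gcongr ?_ + _
  refine mul_le_mul_of_nonneg_left ?_ (by positivity)
  exact singlePhotonKey_le_singlePhotonKey (bHat_pos hα hs₀ hp (lt_min ha hμs))
    (hb_mono (lt_min ha hμs) (lt_min hb hμs) (min_le_min_right μs hab)) hb_le_c
    (hc ⟨ha, has⟩ ⟨hb, hbs⟩ hab)

theorem stmt2_general (α s p₀ η μs μ₁ μ₂ μ₃ μ₄ : ℝ)
    (hα : 0 < α) (hα1 : α ≤ 1) (hs0 : 0 ≤ s) (hs : s < 1 / 2) (hp : 0 < p₀)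
    (hμ₁ : 0 < μ₁) (h₁₂ : μ₁ < μ₂) (h₂s : μ₂ < μs) (hs₃ : μs < μ₃) (h₃₄ : μ₃ < μ₄)
    (hpos : 0 < cHat α s p₀ μs μ₄)
    (hratio : bHat α s p₀ μs / (cHat α s p₀ μs μ₄ + bHat α s p₀ μs) < 1 / 2) :
    Rrate α s p₀ η μs μ₂ ≤ Rrate α s p₀ η μs μ₁ ∧
    Rrate α s p₀ η μs μ₃ ≤ Rrate α s p₀ η μs μ₂ ∧
    Rrate α s p₀ η μs μ₄ ≤ Rrate α s p₀ η μs μ₃ := by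
  have hμs : 0 < μs := by linarith
  have hbc : bHat α s p₀ μs < cHat α s p₀ μs μ₄ := by
    have hb := bHat_pos hα hs0 hp hμs
    rw [div_lt_iff₀ (by positivity)] at hratio
    linarith
  have hR := Rrate_antitoneOn (η := η) hα hα1 hs0 (by linarith) hp hμs (hs₃.trans h₃₄) hbc.le
  have mem : ∀ μ : ℝ, 0 < μ → μ ≤ μ₄ → μ ≠ μs → μ ∈ Ioc 0 μ₄ \ {μs} := fun μ h₀ h₄ hne =>
    ⟨⟨h₀, h₄⟩, hne⟩
  have h₁ := mem μ₁ hμ₁ (by linarith) (by linarith)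
  have h₂ := mem μ₂ (by linarith) (by linarith) (by linarith)
  have h₃ := mem μ₃ (by linarith) (by linarith) (by linarith)
  have h₄ := mem μ₄ (by linarith) le_rfl (by linarith)
  exact ⟨hR h₁ h₂ h₁₂.le, hR h₂ h₃ (h₂s.trans hs₃).le, hR h₃ h₄ h₃₄.le⟩

theorem stmt2 (α s p₀ η μs μ₁ μ₂ μ₃ μ₄ : ℝ)
    (hα : 0 < α) (hα1 : α ≤ 1) (hs0 : 0 ≤ s) (hs : s < 1 / 2) (hp : 0 < p₀) (hη : 0 ≤ η)
    (hμ₁ : 0 < μ₁) (h₁₂ : μ₁ < μ₂) (h₂s : μ₂ < μs) (hs₃ : μs < μ₃) (h₃₄ : μ₃ < μ₄)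
    (hpos : 0 < cHat α s p₀ μs μ₄)
    (hratio : bHat α s p₀ μs / (cHat α s p₀ μs μ₄ + bHat α s p₀ μs) < 1 / 2) :
    Rrate α s p₀ η μs μ₂ ≤ Rrate α s p₀ η μs μ₁ ∧
    Rrate α s p₀ η μs μ₃ ≤ Rrate α s p₀ η μs μ₂ ∧
    Rrate α s p₀ η μs μ₄ ≤ Rrate α s p₀ η μs μ₃ :=
  stmt2_general α s p₀ η μs μ₁ μ₂ μ₃ μ₄ hα hα1 hs0 hs hp hμ₁ h₁₂ h₂s hs₃ h₃₄ hpos hratio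
end

section
/- Let 0 < ν_d ≤ ν_d′ and 0 < ν_s ≤ ν_s′. Assume âₑ(ν_d,ν_s′) > 0 and b̂ₑ(ν_d)/âₑ(ν_d,ν_s′) < 1/2. Then âₑ(ν_d,ν_s′)·(1 − h(b̂ₑ(ν_d)/âₑ(ν_d,ν_s′))) ≤ âₑ(ν_d′,ν_s)·(1 − h(b̂ₑ(ν_d′)/âₑ(ν_d′,ν_s))); i.e., the quantity âₑ(1 − h(b̂ₑ/âₑ)) is monotonically increasing in the true decoy intensity ν_d and monotonically decreasing in the true signal intensity ν_s. -/
/-- Estimate `b̂ₑ` with true decoy intensity `νd` and assumed decoy intensity `μd`. -/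
noncomputable def bE (α s p₀ μd νd : ℝ) : ℝ :=
  ((s * (1 - Real.exp (-α * νd)) + p₀ / 2) * Real.exp μd - p₀ / 2) / μd

/-- Estimate `âₑ` with true intensities `νd, νs` and assumed intensities `μd, μs`. -/
noncomputable def aE (α p₀ μd μs νd νs : ℝ) : ℝ :=
  (μs ^ 2 * Real.exp μd * ((1 - Real.exp (-α * νd)) + p₀ * (1 - Real.exp (-μd)))
    - μd ^ 2 * Real.exp μs * ((1 - Real.exp (-α * νs)) + p₀ * (1 - Real.exp (-μs))))
  / (μd * μs * (μs - μd))

/-! The quantity `a (1 - h (b / a))` grows when `a` grows while the ratio `b / a` shrinks inside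
`[0, 1/2]`, because `h` is increasing there and bounded by `1`. Raising `ν_d` or lowering `ν_s`
raises `âₑ`. Raising `ν_d` raises `b̂ₑ` by exactly `m = s (μ_s - μ_d) / μ_s` times the
corresponding increase of `âₑ`, and `m âₑ ≤ b̂ₑ` always holds; together these prevent `b̂ₑ / âₑ` from increasing. -/

open Real Set

lemma binEnt_eq_binEntropy_div_log_two (x : ℝ) : binEnt x = binEntropy x / log 2 := by
  simp only [binEnt, binEntropy, logb, log_inv]
  ring

lemma binEnt_le_one (x : ℝ) : binEnt x ≤ 1 := by
  rw [binEnt_eq_binEntropy_div_log_two, div_le_one (log_pos one_lt_two)]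
  exact binEntropy_le_log_two

lemma binEnt_monotoneOn : MonotoneOn binEnt (Icc 0 2⁻¹) := fun x hx y hy hxy => by
  rw [binEnt_eq_binEntropy_div_log_two, binEnt_eq_binEntropy_div_log_two]
  gcongr
  exact binEntropy_strictMonoOn.monotoneOn hx hy hxy

lemma mul_one_sub_binEnt_le_mul {a₁ a₂ x₁ x₂ : ℝ} (ha₁ : 0 ≤ a₁) (ha : a₁ ≤ a₂)
    (hx₂ : 0 ≤ x₂) (hx : x₂ ≤ x₁) (hx₁ : x₁ ≤ 2⁻¹) :
    a₁ * (1 - binEnt x₁) ≤ a₂ * (1 - binEnt x₂) := by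
  have hbin : binEnt x₂ ≤ binEnt x₁ :=
    binEnt_monotoneOn ⟨hx₂, hx.trans hx₁⟩ ⟨hx₂.trans hx, hx₁⟩ hx
  exact mul_le_mul ha (by linarith) (by linarith [binEnt_le_one x₁]) (ha₁.trans ha)

lemma div_le_div_of_sub_le_mul_sub {a₁ a₂ b₁ b₂ m : ℝ} (ha₁ : 0 < a₁) (ha : a₁ ≤ a₂)
    (hm : m * a₁ ≤ b₁) (hb : b₂ - b₁ ≤ m * (a₂ - a₁)) : b₂ / a₂ ≤ b₁ / a₁ := by
  rw [div_le_div_iff₀ (ha₁.trans_le ha) ha₁]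
  nlinarith [mul_le_mul_of_nonneg_right hm (sub_nonneg.2 ha)]

section Estimates

variable {α s p₀ μd μs : ℝ}

lemma one_sub_exp_neg_mul_nonneg {ν : ℝ} (hα : 0 ≤ α) (hν : 0 ≤ ν) :
    0 ≤ 1 - exp (-α * ν) := by
  have : exp (-α * ν) ≤ 1 := exp_le_one_iff.2 (by nlinarith)
  linarith

lemma one_sub_exp_neg_mul_le {ν ν' : ℝ} (hα : 0 ≤ α) (hν : ν ≤ ν') :
    1 - exp (-α * ν) ≤ 1 - exp (-α * ν') := by
  have : exp (-α * ν') ≤ exp (-α * ν) := exp_le_exp.2 (by nlinarith)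
  linarith

lemma aE_le_aE {νd νd' νs νs' : ℝ} (hα : 0 ≤ α) (hμd : 0 < μd) (hμ : μd < μs)
    (hνd : νd ≤ νd') (hνs : νs ≤ νs') :
    aE α p₀ μd μs νd νs' ≤ aE α p₀ μd μs νd' νs := by
  have hD : 0 < μd * μs * (μs - μd) := mul_pos (mul_pos hμd (hμd.trans hμ)) (sub_pos.2 hμ)
  unfold aE
  gcongr ?_ / _
  have hd := mul_le_mul_of_nonneg_left (one_sub_exp_neg_mul_le hα hνd)
    (by positivity : 0 ≤ μs ^ 2 * exp μd)
  have hs := mul_le_mul_of_nonneg_left (one_sub_exp_neg_mul_le hα hνs)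
    (by positivity : 0 ≤ μd ^ 2 * exp μs)
  linarith

lemma bE_nonneg {νd : ℝ} (hα : 0 ≤ α) (hs : 0 ≤ s) (hp : 0 ≤ p₀) (hμd : 0 < μd)
    (hνd : 0 ≤ νd) : 0 ≤ bE α s p₀ μd νd := by
  have hT := one_sub_exp_neg_mul_nonneg hα hνd
  have hE : 1 ≤ exp μd := one_le_exp hμd.le
  unfold bE
  apply div_nonneg _ hμd.le
  nlinarith [mul_nonneg hs hT]

lemma bE_sub_bE (νd νd' νs : ℝ) (hμd : μd ≠ 0) (hμs : μs ≠ 0) (hμ : μs - μd ≠ 0) :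
    bE α s p₀ μd νd' - bE α s p₀ μd νd
      = s * (μs - μd) / μs * (aE α p₀ μd μs νd' νs - aE α p₀ μd μs νd νs) := by
  unfold aE bE
  field_simp
  ring

lemma mul_aE_le_bE {νd νs : ℝ} (hα : 0 ≤ α) (hs₀ : 0 ≤ s) (hs : s ≤ 1 / 2) (hp : 0 ≤ p₀)
    (hμd : 0 < μd) (hμ : μd < μs) (hνs : 0 ≤ νs) :
    s * (μs - μd) / μs * aE α p₀ μd μs νd νs ≤ bE α s p₀ μd νd := by
  have hμs : 0 < μs := hμd.trans hμ
  have hU := one_sub_exp_neg_mul_nonneg hα hνs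
  have hWs : 0 ≤ 1 - exp (-μs) := by linarith [exp_le_one_iff.2 (neg_nonpos.2 hμs.le)]
  have hEd : exp μd * (1 - exp (-μd)) = exp μd - 1 := by
    rw [mul_sub, ← exp_add, add_neg_cancel, exp_zero, mul_one]
  have key : μs ^ 2 * ((s * (1 - exp (-α * νd)) + p₀ / 2) * exp μd - p₀ / 2)
      - s * (μs ^ 2 * exp μd * ((1 - exp (-α * νd)) + p₀ * (1 - exp (-μd)))
        - μd ^ 2 * exp μs * ((1 - exp (-α * νs)) + p₀ * (1 - exp (-μs))))
      = μs ^ 2 * p₀ * (1 / 2 - s) * (exp μd - 1)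
        + s * (μd ^ 2 * exp μs * ((1 - exp (-α * νs)) + p₀ * (1 - exp (-μs)))) := by
    linear_combination (-(μs ^ 2 * p₀ * s)) * hEd
  have h₁ : 0 ≤ μs ^ 2 * p₀ * (1 / 2 - s) * (exp μd - 1) := by
    have := one_le_exp hμd.le
    have := sub_nonneg.2 hs
    apply mul_nonneg <;> [positivity; linarith]
  have h₂ : 0 ≤ s * (μd ^ 2 * exp μs * ((1 - exp (-α * νs)) + p₀ * (1 - exp (-μs)))) := by
    positivity
  unfold aE bE
  rw [show ∀ N : ℝ, s * (μs - μd) / μs * (N / (μd * μs * (μs - μd))) = s * N / (μd * μs ^ 2)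
      from fun N => by field_simp [(sub_pos.2 hμ).ne'], div_le_div_iff₀ (by positivity) hμd]
  nlinarith

end Estimates

theorem stmt15_general (α s p₀ μd μs νd νd' νs νs' : ℝ)
    (hα : 0 < α) (hs0 : 0 ≤ s) (hs : s ≤ 1 / 2) (hp : 0 < p₀)
    (hμd : 0 < μd) (hμ : μd < μs)
    (hνd : 0 < νd) (hνd' : νd ≤ νd') (hνs : 0 < νs) (hνs' : νs ≤ νs')
    (hpos : 0 < aE α p₀ μd μs νd νs')
    (hratio : bE α s p₀ μd νd / aE α p₀ μd μs νd νs' < 1 / 2) :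
    aE α p₀ μd μs νd νs' * (1 - binEnt (bE α s p₀ μd νd / aE α p₀ μd μs νd νs'))
      ≤ aE α p₀ μd μs νd' νs * (1 - binEnt (bE α s p₀ μd νd' / aE α p₀ μd μs νd' νs)) := by
  have hμs : 0 < μs := hμd.trans hμ
  have ha : aE α p₀ μd μs νd νs' ≤ aE α p₀ μd μs νd' νs := aE_le_aE hα.le hμd hμ hνd' hνs'
  have hdecrease : bE α s p₀ μd νd' / aE α p₀ μd μs νd' νs
      ≤ bE α s p₀ μd νd / aE α p₀ μd μs νd νs' := by
    refine div_le_div_of_sub_le_mul_sub hpos ha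
      (mul_aE_le_bE hα.le hs0 hs hp.le hμd hμ (hνs.le.trans hνs')) ?_
    rw [bE_sub_bE νd νd' νs' hμd.ne' hμs.ne' (sub_pos.2 hμ).ne']
    have hm : 0 ≤ s * (μs - μd) / μs := div_nonneg (mul_nonneg hs0 (sub_pos.2 hμ).le) hμs.le
    gcongr
    exact aE_le_aE hα.le hμd hμ le_rfl hνs'
  have hb : 0 ≤ bE α s p₀ μd νd' / aE α p₀ μd μs νd' νs :=
    div_nonneg (bE_nonneg hα.le hs0 hp.le hμd (hνd.le.trans hνd')) (hpos.le.trans ha)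
  exact mul_one_sub_binEnt_le_mul hpos.le ha hb hdecrease (by linarith)

theorem stmt15 (α s p₀ μd μs νd νd' νs νs' : ℝ)
    (hα : 0 < α) (hα1 : α ≤ 1) (hs0 : 0 ≤ s) (hs : s ≤ 1 / 2) (hp : 0 < p₀)
    (hμd : 0 < μd) (hμ : μd < μs)
    (hνd : 0 < νd) (hνd' : νd ≤ νd') (hνs : 0 < νs) (hνs' : νs ≤ νs')
    (hpos : 0 < aE α p₀ μd μs νd νs')
    (hratio : bE α s p₀ μd νd / aE α p₀ μd μs νd νs' < 1 / 2) :
    aE α p₀ μd μs νd νs' * (1 - binEnt (bE α s p₀ μd νd / aE α p₀ μd μs νd νs'))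
      ≤ aE α p₀ μd μs νd' νs * (1 - binEnt (bE α s p₀ μd νd' / aE α p₀ μd μs νd' νs)) :=
  stmt15_general α s p₀ μd μs νd νd' νs νs' hα hs0 hs hp hμd hμ hνd hνd' hνs hνs' hpos hratio
end
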